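/- Under the conditions of the Silverman–Brown corollary — i.e. if z_n: T → ℝ satisfies lim_n C(n,k)·P(h(ξ₁,…,ξ_k) > z_n(t)) = λ_t > 0 and lim_n n^{2k−1} P(h(ξ₁,…,ξ_k) > z_n(t)) · P(h(ξ₁,…,ξ_k) > z_n(t), h(ξ₂,…,ξ_{k+1}) > z_n(t))/P(h(ξ₁,…,ξ_k) > z_n(t)) = 0 for all t ∈ T — then lim_{n→∞} P(H_n ≤ z_n(t)) = exp{−λ_t} for all t ∈ T, assuming the Poisson approximation bound of Theorem 1 holds. -/

import Mathlib

/-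
By Theorem 1 it suffices that the bracket on its right-hand side tends to `0` along
`z = z_n(t)`. Since `C(n,k) - C(n-k,k) ≤ k n^(k-1)` and `C(n-k,k-r) ≤ n^(k-1)` for `r ≥ 1`, the
bracket is at most `k n^(k-1) p + 2^k n^(k-1) max_r τ(r)`, and `n^(k-1) p = O(λ_n / n)`.
The key point is that `τ(r)` is nondecreasing in the overlap `r`: if `g_r` is the probability
that `h > z` given the `r` shared coordinates, then `p τ(r) = E[g_r²]`, and `g_r` is an average
of `g_(k-1)` over `k-1-r` further coordinates, so Jensen gives `E[g_r²] ≤ E[g_(k-1)²]`.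
Hence `n^(k-1) τ(r) ≤ n^(2k-1) p τ(k-1) / λ_n → 0`, as `λ_n ≤ n^k p`.
-/

open MeasureTheory ProbabilityTheory Filter Real

variable {Ω : Type*} [MeasureSpace Ω] {S : Type*} [MeasurableSpace S]

/-- `p_{n,z} = P(h(ξ₁, …, ξ_k) > z)`. -/
noncomputable def pnz (k : ℕ) (ξ : ℕ → Ω → S) (h : (Fin k → S) → ℝ) (z : ℝ) : ℝ :=
  (ℙ {ω | z < h (fun j => ξ j ω)}).toReal

/-- `τ_{n,z}(r) = p_{n,z}⁻¹ · P(h(ξ₁, …, ξ_k) > z, h(ξ_{1+k-r}, …, ξ_{2k-r}) > z)`,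
where the two index tuples share exactly `r` coordinates (0-based indexing). -/
noncomputable def taunz (k : ℕ) (ξ : ℕ → Ω → S) (h : (Fin k → S) → ℝ) (z : ℝ) (r : ℕ) : ℝ :=
  (pnz k ξ h z)⁻¹ *
    (ℙ {ω | z < h (fun j => ξ j ω) ∧ z < h (fun j => ξ (k - r + j) ω)}).toReal

/-- `λ_{n,z} = C(n,k) · p_{n,z}`. -/
noncomputable def lamnz (k : ℕ) (ξ : ℕ → Ω → S) (h : (Fin k → S) → ℝ) (n : ℕ) (z : ℝ) : ℝ :=
  (n.choose k : ℝ) * pnz k ξ h z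

/-- The `U`-max-statistic `H_n`: the maximum of the kernel `h` over all
  increasing `k`-tuples of indices from `{0, …, n-1}`. -/
noncomputable def Hmax (k : ℕ) (ξ : ℕ → Ω → S) (h : (Fin k → S) → ℝ) (n : ℕ) (ω : Ω) : ℝ :=
  ⨆ i : {i : Fin k → Fin n // StrictMono i}, h (fun j => ξ (i.1 j) ω)

open scoped ENNReal Topology

section PiSum

variable {T : Type*} [MeasurableSpace T] {γ β : Type*}

theorem measurable_sumElim_right (u : γ → T) : Measurable (Sum.elim u : (β → T) → γ ⊕ β → T) :=
  measurable_pi_lambda _ fun i => by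
    cases i <;> simp only [Sum.elim_inl, Sum.elim_inr] <;> fun_prop

variable (ν : Measure T) [SigmaFinite ν] [Fintype γ] [Fintype β]

theorem measurePreserving_comp_equiv (e : γ ≃ β) :
    MeasurePreserving (fun y : β → T => y ∘ e) (Measure.pi fun _ => ν) (Measure.pi fun _ => ν) :=
  measurePreserving_arrowCongr' _ _ e.symm (MeasurableEquiv.refl T) fun _ => .id ν

theorem lintegral_pi_sum {F : (γ ⊕ β → T) → ℝ≥0∞} (hF : Measurable F) :
    ∫⁻ w, F w ∂Measure.pi (fun _ => ν)
      = ∫⁻ u, ∫⁻ v, F (Sum.elim u v) ∂Measure.pi (fun _ => ν) ∂Measure.pi (fun _ => ν) := by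
  rw [← (measurePreserving_sumPiEquivProdPi_symm fun _ : γ ⊕ β => ν).lintegral_comp hF]
  exact lintegral_prod _ (hF.comp (MeasurableEquiv.measurable _)).aemeasurable

theorem measure_pi_sum {E : Set (γ ⊕ β → T)} (hE : MeasurableSet E) :
    Measure.pi (fun _ => ν) E
      = ∫⁻ u, Measure.pi (fun _ => ν) {v | Sum.elim u v ∈ E} ∂Measure.pi (fun _ => ν) := by
  rw [← lintegral_indicator_one hE, lintegral_pi_sum ν (measurable_one.indicator hE)]
  refine lintegral_congr fun u => ?_
  exact lintegral_indicator_one (measurable_sumElim_right u hE)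

end PiSum

theorem sq_lintegral_le_lintegral_sq {α : Type*} [MeasurableSpace α] (μ : Measure α)
    [IsProbabilityMeasure μ] {f : α → ℝ≥0∞} (hf : AEMeasurable f μ) :
    (∫⁻ a, f a ∂μ) ^ 2 ≤ ∫⁻ a, f a ^ 2 ∂μ := by
  have hHolder := ENNReal.lintegral_mul_le_Lp_mul_Lq μ (p := 2) (q := 2)
    (by constructor <;> norm_num) hf (aemeasurable_const (b := (1 : ℝ≥0∞)))
  simp only [mul_one, ENNReal.one_rpow, lintegral_const, measure_univ] at hHolder
  calc (∫⁻ a, f a ∂μ) ^ 2 ≤ ((∫⁻ a, f a ^ (2 : ℝ) ∂μ) ^ (1 / (2 : ℝ))) ^ (2 : ℝ) := by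
        rw [ENNReal.rpow_two]; gcongr; simpa using hHolder
    _ = ∫⁻ a, f a ^ 2 ∂μ := by
        rw [← ENNReal.rpow_mul]; norm_num

theorem apply_comp_equiv_eq {k : ℕ} {T R : Type*} {h : (Fin k → T) → R}
    (hsymm : ∀ (σ : Equiv.Perm (Fin k)) (x : Fin k → T), h (x ∘ σ) = h x)
    {ι : Type*} (c c' : Fin k ≃ ι) (x : ι → T) : h (x ∘ c) = h (x ∘ c') := by
  simpa [Function.comp_def] using hsymm (c.trans c'.symm) (x ∘ c')

section SymmetricKernel

variable (ν : Measure S) {k : ℕ} (h : (Fin k → S) → ℝ) (z : ℝ)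

noncomputable def condExceedProb {α β : Type*} [Fintype β] (c : Fin k ≃ α ⊕ β) (x : α → S) :
    ℝ≥0∞ :=
  Measure.pi (fun _ : β => ν) {y | z < h (Sum.elim x y ∘ c)}

/-- `P(h(X_A) > z, h(X_B) > z)` for two `k`-blocks of i.i.d. `ν`-coordinates sharing exactly
the `α`-coordinates: given these, the two events are independent. -/
noncomputable def overlapMoment {α β : Type*} [Fintype α] [Fintype β] (c : Fin k ≃ α ⊕ β) :
    ℝ≥0∞ :=
  ∫⁻ x, condExceedProb ν h z c x ^ 2 ∂Measure.pi (fun _ : α => ν)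

variable {ν h z}

theorem measurable_condExceedProb [SigmaFinite ν] (hh : Measurable h) {α β : Type*} [Fintype β]
    (c : Fin k ≃ α ⊕ β) : Measurable (condExceedProb ν h z c) :=
  measurable_measure_prodMk_left <| measurableSet_lt measurable_const <| hh.comp <|
    (measurable_pi_lambda _ fun j => measurable_pi_apply (c j)).comp
      (MeasurableEquiv.sumPiEquivProdPi fun _ => S).symm.measurable

theorem condExceedProb_congr (hsymm : ∀ (σ : Equiv.Perm (Fin k)) (x : Fin k → S), h (x ∘ σ) = h x)
    {α β : Type*} [Fintype β] (c c' : Fin k ≃ α ⊕ β) :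
    condExceedProb ν h z c = condExceedProb ν h z c' := by
  ext x
  simp only [condExceedProb, apply_comp_equiv_eq hsymm c c']

theorem measurableSet_exceed (hh : Measurable h) {α β : Type*} (c : Fin k ≃ α ⊕ β) (x : α → S) :
    MeasurableSet {y : β → S | z < h (Sum.elim x y ∘ c)} :=
  measurableSet_lt measurable_const <|
    hh.comp <| (measurable_pi_lambda _ fun j => measurable_pi_apply (c j)).comp
      (measurable_sumElim_right x)

theorem condExceedProb_eq_lintegral [SigmaFinite ν] (hh : Measurable h) {α β γ : Type*}
    [Fintype β] [Fintype γ] (c : Fin k ≃ α ⊕ (γ ⊕ β)) (x : α → S) :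
    condExceedProb ν h z c x
      = ∫⁻ u, condExceedProb ν h z (c.trans (Equiv.sumAssoc α γ β).symm) (Sum.elim x u)
          ∂Measure.pi (fun _ => ν) := by
  have hassoc : ∀ u v, Sum.elim x (Sum.elim u v) ∘ c
      = Sum.elim (Sum.elim x u) v ∘ c.trans (Equiv.sumAssoc α γ β).symm := by
    intro u v; ext j
    simp only [Function.comp_apply, Equiv.trans_apply]
    rcases c j with i | i | i <;> rfl
  simp only [condExceedProb, measure_pi_sum ν (measurableSet_exceed hh c x), Set.mem_ofPred_eq,
    hassoc]

variable [IsProbabilityMeasure ν] {α α' β β' γ : Type*} [Fintype α] [Fintype α'] [Fintype β]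
  [Fintype β'] [Fintype γ]

theorem overlapMoment_le_sumAssoc (hh : Measurable h) (c : Fin k ≃ α ⊕ (γ ⊕ β)) :
    overlapMoment ν h z c ≤ overlapMoment ν h z (c.trans (Equiv.sumAssoc α γ β).symm) := by
  set c' := c.trans (Equiv.sumAssoc α γ β).symm
  have hm := measurable_condExceedProb (ν := ν) (z := z) hh c'
  calc overlapMoment ν h z c
      = ∫⁻ x, (∫⁻ u, condExceedProb ν h z c' (Sum.elim x u) ∂Measure.pi (fun _ => ν)) ^ 2
          ∂Measure.pi (fun _ => ν) := by
        simp_rw [overlapMoment, condExceedProb_eq_lintegral hh c, c']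
    _ ≤ ∫⁻ x, ∫⁻ u, condExceedProb ν h z c' (Sum.elim x u) ^ 2 ∂Measure.pi (fun _ => ν)
          ∂Measure.pi (fun _ => ν) :=
        lintegral_mono fun x => sq_lintegral_le_lintegral_sq _
          (hm.comp (measurable_sumElim_right x)).aemeasurable
    _ = overlapMoment ν h z c' := (lintegral_pi_sum ν (hm.pow_const 2)).symm

theorem overlapMoment_sumCongr (hh : Measurable h) (eα : α ≃ α') (eβ : β ≃ β') (c : Fin k ≃ α ⊕ β) :
    overlapMoment ν h z (c.trans (Equiv.sumCongr eα eβ)) = overlapMoment ν h z c := by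
  have hcond : ∀ x : α' → S, condExceedProb ν h z (c.trans (Equiv.sumCongr eα eβ)) x
      = condExceedProb ν h z c (x ∘ eα) := by
    intro x
    have hcomp : ∀ y : β' → S, Sum.elim x y ∘ c.trans (Equiv.sumCongr eα eβ)
        = Sum.elim (x ∘ eα) (y ∘ eβ) ∘ c := by
      intro y; ext j
      simp only [Function.comp_apply, Equiv.trans_apply]
      rcases c j with i | i <;> rfl
    simp only [condExceedProb, hcomp]
    exact (measurePreserving_comp_equiv ν eβ).measure_preimage
      (measurableSet_exceed hh c (x ∘ eα)).nullMeasurableSet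
  simp only [overlapMoment, hcond]
  exact (measurePreserving_comp_equiv ν eα).lintegral_comp
    ((measurable_condExceedProb hh c).pow_const 2)

theorem overlapMoment_mono (hh : Measurable h)
    (hsymm : ∀ (σ : Equiv.Perm (Fin k)) (x : Fin k → S), h (x ∘ σ) = h x)
    (c : Fin k ≃ α ⊕ β) (c' : Fin k ≃ α' ⊕ β') (hcard : Fintype.card α ≤ Fintype.card α') :
    overlapMoment ν h z c ≤ overlapMoment ν h z c' := by
  let γ := Fin (Fintype.card α' - Fintype.card α)
  have hk := Fintype.card_congr c
  have hk' := Fintype.card_congr c'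
  simp only [Fintype.card_fin, Fintype.card_sum] at hk hk'
  let eβ : β ≃ γ ⊕ β' := Fintype.equivOfCardEq <| by
    simp only [Fintype.card_sum, γ, Fintype.card_fin]; omega
  let eα : α ⊕ γ ≃ α' := Fintype.equivOfCardEq <| by
    simp only [Fintype.card_sum, γ, Fintype.card_fin]; omega
  let c₁ := c.trans (Equiv.sumCongr (Equiv.refl α) eβ)
  let c₂ := c₁.trans (Equiv.sumAssoc α γ β').symm
  calc overlapMoment ν h z c = overlapMoment ν h z c₁ :=
        (overlapMoment_sumCongr hh (Equiv.refl α) eβ c).symm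
    _ ≤ overlapMoment ν h z c₂ := overlapMoment_le_sumAssoc hh c₁
    _ = overlapMoment ν h z (c₂.trans (Equiv.sumCongr eα (Equiv.refl β'))) :=
        (overlapMoment_sumCongr hh eα (Equiv.refl β') c₂).symm
    _ = overlapMoment ν h z c' := by simp only [overlapMoment, condExceedProb_congr hsymm _ c']

end SymmetricKernel

theorem measurableSet_pair_exceed {k : ℕ} {h : (Fin k → S) → ℝ} {z : ℝ} (hh : Measurable h)
    {α β : Type*} (c c' : Fin k ≃ α ⊕ β) :
    MeasurableSet {x : α ⊕ (β ⊕ β) → S |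
      z < h (fun j => x (Sum.map id Sum.inl (c j)))
        ∧ z < h (fun j => x (Sum.map id Sum.inr (c' j)))} :=
  have hm (f : Fin k → α ⊕ (β ⊕ β)) : Measurable fun x : α ⊕ (β ⊕ β) → S => h (fun j => x (f j)) :=
    hh.comp (measurable_pi_lambda _ fun _ => measurable_pi_apply _)
  (measurableSet_lt measurable_const (hm _)).inter (measurableSet_lt measurable_const (hm _))

theorem measure_pi_pair_eq_overlapMoment {ν : Measure S} [IsProbabilityMeasure ν] {k : ℕ}
    {h : (Fin k → S) → ℝ} {z : ℝ} (hh : Measurable h)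
    (hsymm : ∀ (σ : Equiv.Perm (Fin k)) (x : Fin k → S), h (x ∘ σ) = h x)
    {α β : Type*} [Fintype α] [Fintype β] (c c' : Fin k ≃ α ⊕ β) :
    Measure.pi (fun _ => ν) {x : α ⊕ (β ⊕ β) → S |
        z < h (fun j => x (Sum.map id Sum.inl (c j)))
          ∧ z < h (fun j => x (Sum.map id Sum.inr (c' j)))}
      = overlapMoment ν h z c := by
  rw [measure_pi_sum ν (measurableSet_pair_exceed hh c c')]
  refine lintegral_congr fun x => ?_
  calc _ = Measure.pi (fun _ => ν) (MeasurableEquiv.sumPiEquivProdPi (fun _ => S) ⁻¹'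
          ({y | z < h (Sum.elim x y ∘ c)} ×ˢ {y | z < h (Sum.elim x y ∘ c')})) := by
        congr 1; ext w
        simp only [Set.mem_ofPred_eq, Sum.elim_map]
        rfl
    _ = condExceedProb ν h z c x * condExceedProb ν h z c' x := by
        rw [(measurePreserving_sumPiEquivProdPi _).measure_preimage
          ((measurableSet_exceed hh c x).prod (measurableSet_exceed hh c' x)).nullMeasurableSet,
          Measure.prod_prod]
        rfl
    _ = condExceedProb ν h z c x ^ 2 := by rw [condExceedProb_congr hsymm c' c, sq]

section IID

variable {ι : Type*} {X : ι → Ω → S} {μ : Measure S}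

theorem map_eq_pi_of_iIndepFun (hX : ∀ i, Measurable (X i)) (hindep : iIndepFun X ℙ)
    (hident : ∀ i, (ℙ : Measure Ω).map (X i) = μ) {α : Type*} [Fintype α] {e : α → ι}
    (he : e.Injective) :
    (ℙ : Measure Ω).map (fun ω a => X (e a) ω) = Measure.pi fun _ => μ := by
  rw [(hindep.precomp he).map_fun_eq_pi_map fun a => (hX (e a)).aemeasurable]
  simp only [hident]

theorem measure_pair_exceed_eq_overlapMoment [IsProbabilityMeasure μ]
    (hX : ∀ i, Measurable (X i)) (hindep : iIndepFun X ℙ)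
    (hident : ∀ i, (ℙ : Measure Ω).map (X i) = μ) {k : ℕ} {h : (Fin k → S) → ℝ} {z : ℝ}
    (hh : Measurable h) (hsymm : ∀ (σ : Equiv.Perm (Fin k)) (x : Fin k → S), h (x ∘ σ) = h x)
    {α β : Type*} [Fintype α] [Fintype β] {e : α ⊕ (β ⊕ β) → ι} (he : e.Injective)
    (c c' : Fin k ≃ α ⊕ β) :
    ℙ {ω | z < h (fun j => X (e (Sum.map id Sum.inl (c j))) ω)
        ∧ z < h (fun j => X (e (Sum.map id Sum.inr (c' j))) ω)} = overlapMoment μ h z c := by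
  have hXe : Measurable fun ω a => X (e a) ω := measurable_pi_lambda _ fun a => hX (e a)
  rw [← measure_pi_pair_eq_overlapMoment hh hsymm c c',
    ← map_eq_pi_of_iIndepFun hX hindep hident he,
    Measure.map_apply hXe (measurableSet_pair_exceed hh c c')]
  rfl

end IID

theorem exists_measure_pair_exceed_eq_overlapMoment {X : ℕ → Ω → S} {μ : Measure S}
    [IsProbabilityMeasure μ] (hX : ∀ i, Measurable (X i)) (hindep : iIndepFun X ℙ)
    (hident : ∀ i, (ℙ : Measure Ω).map (X i) = μ) {k : ℕ} {h : (Fin k → S) → ℝ} {z : ℝ}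
    (hh : Measurable h) (hsymm : ∀ (σ : Equiv.Perm (Fin k)) (x : Fin k → S), h (x ∘ σ) = h x)
    {r : ℕ} (hr : r ≤ k) :
    ∃ c : Fin k ≃ Fin r ⊕ Fin (k - r),
      ℙ {ω | z < h (fun j => X j ω) ∧ z < h (fun j => X (k - r + j) ω)}
        = overlapMoment μ h z c := by
  -- `e` numbers the shared block `k - r, …, k - 1`, then the rest of each of the two tuples
  let e : Fin r ⊕ (Fin (k - r) ⊕ Fin (k - r)) → ℕ :=
    Sum.elim (fun i => k - r + i) (Sum.elim (fun i => i) (fun i => k + i))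
  have he : e.Injective := by
    rintro (i | i | i) (i' | i' | i') hii' <;> simp [e, Fin.ext_iff] at hii' ⊢ <;> omega
  let fA : Fin r ⊕ Fin (k - r) → Fin k :=
    Sum.elim (fun i => ⟨k - r + i, by omega⟩) (fun i => ⟨i, by omega⟩)
  let fB : Fin r ⊕ Fin (k - r) → Fin k :=
    Sum.elim (fun i => ⟨i, by omega⟩) (fun i => ⟨r + i, by omega⟩)
  have hcard : Fintype.card (Fin r ⊕ Fin (k - r)) = Fintype.card (Fin k) := by simp; omega
  have hfA : fA.Bijective := (Fintype.bijective_iff_injective_and_card fA).2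
    ⟨by rintro (i | i) (i' | i') hii' <;> simp [fA, Fin.ext_iff] at hii' ⊢ <;> omega, hcard⟩
  have hfB : fB.Bijective := (Fintype.bijective_iff_injective_and_card fB).2
    ⟨by rintro (i | i) (i' | i') hii' <;> simp [fB, Fin.ext_iff] at hii' ⊢ <;> omega, hcard⟩
  let c := (Equiv.ofBijective fA hfA).symm
  let c' := (Equiv.ofBijective fB hfB).symm
  have hA : ∀ j : Fin k, e (Sum.map id Sum.inl (c j)) = j := fun j => by
    conv_rhs => rw [← Equiv.ofBijective_apply_symm_apply fA hfA j]
    generalize c j = w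
    rcases w with i | i <;> rfl
  have hB : ∀ j : Fin k, e (Sum.map id Sum.inr (c' j)) = k - r + j := fun j => by
    conv_rhs => rw [← Equiv.ofBijective_apply_symm_apply fB hfB j]
    generalize c' j = w
    rcases w with i | i
    · rfl
    · simp only [e, fB, Sum.map_inr, Sum.elim_inr]; omega
  refine ⟨c, ?_⟩
  rw [← measure_pair_exceed_eq_overlapMoment hX hindep hident hh hsymm he c c']
  simp only [hA, hB]

theorem taunz_nonneg {T : Type*} {k : ℕ} {ξ : ℕ → Ω → T} {h : (Fin k → T) → ℝ} {z : ℝ} {r : ℕ} :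
    0 ≤ taunz k ξ h z r :=
  mul_nonneg (inv_nonneg.2 ENNReal.toReal_nonneg) ENNReal.toReal_nonneg

theorem taunz_le_taunz_sub_one [IsProbabilityMeasure (ℙ : Measure Ω)] {k : ℕ} {ξ : ℕ → Ω → S}
    {h : (Fin k → S) → ℝ} (hmeas : ∀ i, Measurable (ξ i)) (hindep : iIndepFun ξ ℙ)
    (hident : ∀ i j, Measure.map (ξ i) ℙ = Measure.map (ξ j) ℙ) (hh : Measurable h)
    (hsymm : ∀ (σ : Equiv.Perm (Fin k)) (x : Fin k → S), h (x ∘ σ) = h x) (z : ℝ) {r : ℕ}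
    (hr : r ≤ k - 1) :
    taunz k ξ h z r ≤ taunz k ξ h z (k - 1) := by
  have : IsProbabilityMeasure ((ℙ : Measure Ω).map (ξ 0)) :=
    Measure.isProbabilityMeasure_map (hmeas 0).aemeasurable
  obtain ⟨c, hc⟩ := exists_measure_pair_exceed_eq_overlapMoment (z := z) hmeas hindep
    (fun i => hident i 0) hh hsymm (r := r) (by omega)
  obtain ⟨c', hc'⟩ := exists_measure_pair_exceed_eq_overlapMoment (z := z) hmeas hindep
    (fun i => hident i 0) hh hsymm (r := k - 1) (by omega)
  refine mul_le_mul_of_nonneg_left (ENNReal.toReal_mono (measure_ne_top _ _) ?_)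
    (inv_nonneg.2 ENNReal.toReal_nonneg)
  rw [hc, hc']
  exact overlapMoment_mono hh hsymm c c' (by simpa using hr)

theorem Nat.choose_le_choose_sub_add_mul_pow {k : ℕ} (hk : 0 < k) (n j : ℕ) :
    n.choose k ≤ (n - j).choose k + j * n ^ (k - 1) := by
  induction j with
  | zero => simp
  | succ j ih =>
    have step : (n - j).choose k ≤ (n - (j + 1)).choose k + n ^ (k - 1) := by
      rcases hnj : n - j with _ | m
      · rw [show n - (j + 1) = 0 by omega]
        exact Nat.le_add_right _ _
      · rw [show n - (j + 1) = m by omega, Nat.choose_succ_left m k hk, add_comm]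
        gcongr
        exact (Nat.choose_le_pow m (k - 1)).trans (Nat.pow_le_pow_left (by omega) _)
    rw [add_one_mul]
    linarith

theorem Nat.pow_le_two_pow_mul_factorial_mul_choose {n k : ℕ} (hn : 2 * k ≤ n) :
    n ^ k ≤ 2 ^ k * (k.factorial * n.choose k) := by
  calc n ^ k ≤ (2 * (n + 1 - k)) ^ k := Nat.pow_le_pow_left (by omega) k
    _ = 2 ^ k * (n + 1 - k) ^ k := Nat.mul_pow ..
    _ ≤ 2 ^ k * n.descFactorial k := Nat.mul_le_mul_left _ (Nat.pow_sub_le_descFactorial n k)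
    _ = 2 ^ k * (k.factorial * n.choose k) := by rw [Nat.descFactorial_eq_factorial_mul_choose]

theorem Nat.sum_Ico_one_choose_le_two_pow (k : ℕ) : ∑ r ∈ Finset.Ico 1 k, k.choose r ≤ 2 ^ k :=
  calc ∑ r ∈ Finset.Ico 1 k, k.choose r ≤ ∑ r ∈ Finset.range (k + 1), k.choose r :=
        Finset.sum_le_sum_of_subset fun r hr => by simp at hr ⊢; omega
    _ = 2 ^ k := Nat.sum_range_choose k

/-- The bracket on the right-hand side of Theorem 1. -/
noncomputable def poissonError (k n : ℕ) (p : ℝ) (τ : ℕ → ℝ) : ℝ :=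
  p * ((n.choose k : ℝ) - ((n - k).choose k : ℝ)) +
    ∑ r ∈ Finset.Ico 1 k, (k.choose r : ℝ) * ((n - k).choose (k - r) : ℝ) * τ r

section PoissonError

variable {k n : ℕ} {p : ℝ} {τ : ℕ → ℝ}

theorem poissonError_nonneg (hp : 0 ≤ p) (hτ : ∀ r, 0 ≤ τ r) : 0 ≤ poissonError k n p τ := by
  have : ((n - k).choose k : ℝ) ≤ n.choose k := by
    exact_mod_cast Nat.choose_le_choose k (Nat.sub_le n k)
  exact add_nonneg (mul_nonneg hp (sub_nonneg.2 this))
    (Finset.sum_nonneg fun r _ => mul_nonneg (by positivity) (hτ r))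

theorem poissonError_le (hk : 0 < k) (hn : 1 ≤ n) (hp : 0 ≤ p) (hτ : ∀ r, 0 ≤ τ r)
    (hτ_le : ∀ r ∈ Finset.Ico 1 k, τ r ≤ τ (k - 1)) :
    poissonError k n p τ
      ≤ k * ((n : ℝ) ^ (k - 1) * p) + 2 ^ k * ((n : ℝ) ^ (k - 1) * τ (k - 1)) := by
  have hfirst : (n.choose k : ℝ) - (n - k).choose k ≤ k * (n : ℝ) ^ (k - 1) := by
    have := Nat.choose_le_choose_sub_add_mul_pow hk n k
    rw [sub_le_iff_le_add']
    exact_mod_cast this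
  have hterm : ∀ r ∈ Finset.Ico 1 k,
      ((n - k).choose (k - r) : ℝ) * τ r ≤ (n : ℝ) ^ (k - 1) * τ (k - 1) := by
    intro r hr
    have hr1 := (Finset.mem_Ico.1 hr).1
    have hchoose : (n - k).choose (k - r) ≤ n ^ (k - 1) :=
      calc (n - k).choose (k - r) ≤ n ^ (k - r) :=
            (Nat.choose_le_pow _ _).trans (Nat.pow_le_pow_left (Nat.sub_le n k) _)
        _ ≤ n ^ (k - 1) := Nat.pow_le_pow_right hn (by omega)
    exact mul_le_mul (by exact_mod_cast hchoose) (hτ_le r hr) (hτ r) (by positivity)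
  have hsum : (∑ r ∈ Finset.Ico 1 k, (k.choose r : ℝ)) ≤ 2 ^ k := by
    exact_mod_cast Nat.sum_Ico_one_choose_le_two_pow k
  unfold poissonError
  gcongr ?_ + ?_
  · have := mul_le_mul_of_nonneg_left hfirst hp
    linarith
  · calc ∑ r ∈ Finset.Ico 1 k, (k.choose r : ℝ) * ((n - k).choose (k - r) : ℝ) * τ r
        ≤ ∑ r ∈ Finset.Ico 1 k, (k.choose r : ℝ) * ((n : ℝ) ^ (k - 1) * τ (k - 1)) :=
          Finset.sum_le_sum fun r hr => by
            rw [mul_assoc]; exact mul_le_mul_of_nonneg_left (hterm r hr) (by positivity)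
      _ ≤ 2 ^ k * ((n : ℝ) ^ (k - 1) * τ (k - 1)) := by
          rw [← Finset.sum_mul]
          exact mul_le_mul_of_nonneg_right hsum (mul_nonneg (by positivity) (hτ _))

end PoissonError

section Asymptotics

variable {k : ℕ} {p : ℕ → ℝ} {Λ : ℝ}

theorem tendsto_pow_sub_one_mul_of_tendsto_choose_mul (hk : 0 < k) (hp : ∀ n, 0 ≤ p n)
    (hlam : Tendsto (fun n => (n.choose k : ℝ) * p n) atTop (𝓝 Λ)) :
    Tendsto (fun n : ℕ => (n : ℝ) ^ (k - 1) * p n) atTop (𝓝 0) := by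
  have hbound : Tendsto (fun n : ℕ => 2 ^ k * k.factorial * ((n.choose k : ℝ) * p n) / n) atTop
      (𝓝 0) :=
    (hlam.const_mul _).div_atTop tendsto_natCast_atTop_atTop
  refine squeeze_zero' (.of_forall fun n => mul_nonneg (by positivity) (hp n)) ?_ hbound
  filter_upwards [eventually_ge_atTop (2 * k)] with n hn
  have hpow : (n : ℝ) ^ k ≤ 2 ^ k * (k.factorial * n.choose k) := by
    exact_mod_cast Nat.pow_le_two_pow_mul_factorial_mul_choose hn
  rw [le_div_iff₀ (by exact_mod_cast (by omega : 0 < n))]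
  calc (n : ℝ) ^ (k - 1) * p n * n = (n : ℝ) ^ k * p n := by
        rw [mul_right_comm, ← pow_succ, Nat.sub_add_cancel hk]
    _ ≤ 2 ^ k * (k.factorial * n.choose k) * p n := mul_le_mul_of_nonneg_right hpow (hp n)
    _ = 2 ^ k * k.factorial * ((n.choose k : ℝ) * p n) := by ring

theorem tendsto_pow_sub_one_mul_of_tendsto_pow_mul_mul (hk : 0 < k) {τ : ℕ → ℝ}
    (hp : ∀ n, 0 ≤ p n) (hτ : ∀ n, 0 ≤ τ n) (hΛ : 0 < Λ)
    (hlam : Tendsto (fun n => (n.choose k : ℝ) * p n) atTop (𝓝 Λ))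
    (hcorr : Tendsto (fun n : ℕ => (n : ℝ) ^ (2 * k - 1) * p n * τ n) atTop (𝓝 0)) :
    Tendsto (fun n : ℕ => (n : ℝ) ^ (k - 1) * τ n) atTop (𝓝 0) := by
  have hquot : Tendsto (fun n : ℕ => (n : ℝ) ^ (2 * k - 1) * p n * τ n / ((n.choose k : ℝ) * p n))
      atTop (𝓝 0) := by
    have := hcorr.div hlam hΛ.ne'
    rwa [zero_div] at this
  refine squeeze_zero' (.of_forall fun n => mul_nonneg (by positivity) (hτ n)) ?_ hquot
  filter_upwards [hlam.eventually (lt_mem_nhds hΛ)] with n hlamn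
  have hchoose : (n.choose k : ℝ) ≤ (n : ℝ) ^ k := by exact_mod_cast Nat.choose_le_pow n k
  rw [le_div_iff₀ hlamn]
  calc (n : ℝ) ^ (k - 1) * τ n * ((n.choose k : ℝ) * p n)
      ≤ (n : ℝ) ^ (k - 1) * τ n * ((n : ℝ) ^ k * p n) := by
        gcongr
        · exact mul_nonneg (by positivity) (hτ n)
        · exact hp n
    _ = (n : ℝ) ^ (2 * k - 1) * p n * τ n := by
        rw [show 2 * k - 1 = k - 1 + k by omega, pow_add]; ring

theorem tendsto_poissonError_zero (hk : 0 < k) {τ : ℕ → ℕ → ℝ} (hp : ∀ n, 0 ≤ p n)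
    (hτ : ∀ n r, 0 ≤ τ n r) (hτ_le : ∀ n, ∀ r ∈ Finset.Ico 1 k, τ n r ≤ τ n (k - 1))
    (hΛ : 0 < Λ) (hlam : Tendsto (fun n => (n.choose k : ℝ) * p n) atTop (𝓝 Λ))
    (hcorr : Tendsto (fun n : ℕ => (n : ℝ) ^ (2 * k - 1) * p n * τ n (k - 1)) atTop (𝓝 0)) :
    Tendsto (fun n => poissonError k n (p n) (τ n)) atTop (𝓝 0) := by
  have hp_small := tendsto_pow_sub_one_mul_of_tendsto_choose_mul hk hp hlam
  have hτ_small := tendsto_pow_sub_one_mul_of_tendsto_pow_mul_mul hk hp (fun n => hτ n (k - 1))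
    hΛ hlam hcorr
  have hbound := (hp_small.const_mul (k : ℝ)).add (hτ_small.const_mul (2 ^ k))
  rw [mul_zero, mul_zero, add_zero] at hbound
  refine squeeze_zero' (.of_forall fun n => poissonError_nonneg (hp n) (hτ n)) ?_ hbound
  filter_upwards [eventually_ge_atTop 1] with n hn
  exact poissonError_le hk hn (hp n) (hτ n) (hτ_le n)

end Asymptotics

theorem stmt_18 [IsProbabilityMeasure (ℙ : Measure Ω)]
    (k : ℕ) (hk : 0 < k) (ξ : ℕ → Ω → S)
    (hmeas : ∀ i, Measurable (ξ i))
    (hindep : iIndepFun ξ ℙ)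
    (hident : ∀ i j, Measure.map (ξ i) ℙ = Measure.map (ξ j) ℙ)
    (h : (Fin k → S) → ℝ) (hmeas_h : Measurable h)
    (hsymm : ∀ (σ : Equiv.Perm (Fin k)) (x : Fin k → S), h (x ∘ σ) = h x)
    -- the Poisson approximation bound of Theorem 1:
    (hbound : ∀ n, k ≤ n → ∀ z : ℝ,
      |(ℙ {ω | Hmax k ξ h n ω ≤ z}).toReal - Real.exp (-(lamnz k ξ h n z))| ≤
        (1 - Real.exp (-(lamnz k ξ h n z))) *
          (pnz k ξ h z * ((n.choose k : ℝ) - ((n - k).choose k : ℝ)) +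
            ∑ r ∈ Finset.Ico 1 k,
              (k.choose r : ℝ) * ((n - k).choose (k - r) : ℝ) * taunz k ξ h z r))
    (T : Set ℝ) (zseq : ℕ → ℝ → ℝ) (Λ : ℝ → ℝ)
    (hΛpos : ∀ t ∈ T, 0 < Λ t)
    -- condition (2): λ_{n, z_n(t)} → λ_t > 0
    (hlam : ∀ t ∈ T, Tendsto (fun n => lamnz k ξ h n (zseq n t)) atTop (nhds (Λ t)))
    -- condition (3): n^{2k-1} p_{n,z_n(t)} τ_{n,z_n(t)}(k-1) → 0
    (hcorr : ∀ t ∈ T, Tendsto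
      (fun n : ℕ => (n : ℝ) ^ (2 * k - 1) * pnz k ξ h (zseq n t) * taunz k ξ h (zseq n t) (k - 1))
      atTop (nhds 0)) :
    ∀ t ∈ T, Tendsto (fun n => (ℙ {ω | Hmax k ξ h n ω ≤ zseq n t}).toReal)
      atTop (nhds (Real.exp (-Λ t))) := by
  intro t ht
  have hτ_le : ∀ n, ∀ r ∈ Finset.Ico 1 k,
      taunz k ξ h (zseq n t) r ≤ taunz k ξ h (zseq n t) (k - 1) := fun n r hr =>
    taunz_le_taunz_sub_one hmeas hindep hident hmeas_h hsymm _ (by simp at hr; omega)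
  have herr : Tendsto (fun n => poissonError k n (pnz k ξ h (zseq n t)) (taunz k ξ h (zseq n t)))
      atTop (𝓝 0) :=
    tendsto_poissonError_zero hk (fun _ => ENNReal.toReal_nonneg) (fun _ _ => taunz_nonneg)
      hτ_le (hΛpos t ht) (hlam t ht) (hcorr t ht)
  have hexp : Tendsto (fun n => exp (-lamnz k ξ h n (zseq n t))) atTop (𝓝 (exp (-Λ t))) :=
    (continuous_exp.tendsto _).comp (hlam t ht).neg
  have hbound' : Tendsto (fun n => (1 - exp (-lamnz k ξ h n (zseq n t))) *
      poissonError k n (pnz k ξ h (zseq n t)) (taunz k ξ h (zseq n t))) atTop (𝓝 0) := by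
    simpa using (tendsto_const_nhds.sub hexp).mul herr
  have hdiff : Tendsto (fun n => (ℙ {ω | Hmax k ξ h n ω ≤ zseq n t}).toReal -
      exp (-lamnz k ξ h n (zseq n t))) atTop (𝓝 0) :=
    squeeze_zero_norm' ((eventually_ge_atTop k).mono fun n hn => hbound n hn (zseq n t)) hbound'
  simpa using hdiff.add hexp
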